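/- arXiv:1312.1893 — 4 statements merged into one kernel-verified Lean document; each statement's English description precedes it below -/
import Mathlib

section
/- Let Γ be the Heisenberg group on A × ℤ as above, where the symplectic form ⟨·,·⟩ on A is nondegenerate. Let γ₀ = (a₀, z₀) be a noncentral element of Γ (equivalently a₀ ≠ 0). Then there exists a nonzero integer n₀ such that the conjugacy class 𝔎 of γ₀ satisfies {(0, n₀·n) : n ∈ ℤ} · γ₀ ⊆ 𝔎 ⊆ Z · γ₀, where Z = {0} × ℤ is the center of Γ. -/
/-- The Heisenberg group associated to an integral symplectic form `ω` on a free abelian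
group `A`: the underlying set is `A × ℤ`, with group law
`(a,z)(a',z') = (a+a', z+z'+ω a a')`. (For an alternating form `ω`, the inverse
`(-a, -z + ω a a)` is just `(-a, -z)`.) -/
structure Heis {A : Type*} [AddCommGroup A] (ω : A →ₗ[ℤ] A →ₗ[ℤ] ℤ) where
  fst : A
  snd : ℤ

namespace Heis

variable {A : Type*} [AddCommGroup A] {ω : A →ₗ[ℤ] A →ₗ[ℤ] ℤ}

def mul' (g h : Heis ω) : Heis ω := ⟨g.fst + h.fst, g.snd + h.snd + ω g.fst h.fst⟩

def inv' (g : Heis ω) : Heis ω := ⟨-g.fst, -g.snd + ω g.fst g.fst⟩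

theorem mul'_assoc (g h k : Heis ω) : mul' (mul' g h) k = mul' g (mul' h k) := by
  obtain ⟨a, z⟩ := g; obtain ⟨b, w⟩ := h; obtain ⟨c, u⟩ := k
  refine congrArg₂ Heis.mk ?_ ?_ <;>
    simp [mul', map_add, LinearMap.add_apply] <;> first | ring | abel

theorem one_mul' (g : Heis ω) : mul' ⟨0, 0⟩ g = g := by
  obtain ⟨a, z⟩ := g
  refine congrArg₂ Heis.mk ?_ ?_ <;> simp [mul']

theorem mul_one' (g : Heis ω) : mul' g ⟨0, 0⟩ = g := by
  obtain ⟨a, z⟩ := g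
  refine congrArg₂ Heis.mk ?_ ?_ <;> simp [mul']

theorem inv_mul_cancel' (g : Heis ω) : mul' (inv' g) g = ⟨0, 0⟩ := by
  obtain ⟨a, z⟩ := g
  refine congrArg₂ Heis.mk ?_ ?_ <;>
    simp [mul', inv', map_neg, LinearMap.neg_apply] <;> ring

instance : Group (Heis ω) where
  mul := mul'
  one := ⟨0, 0⟩
  inv := inv'
  mul_assoc := mul'_assoc
  one_mul := one_mul'
  mul_one := mul_one'
  inv_mul_cancel := inv_mul_cancel'

theorem mul_def (g h : Heis ω) :
    g * h = ⟨g.fst + h.fst, g.snd + h.snd + ω g.fst h.fst⟩ := rfl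

theorem inv_def (g : Heis ω) : g⁻¹ = ⟨-g.fst, -g.snd + ω g.fst g.fst⟩ := rfl

end Heis

/-!
Since `ω` is alternating, `(a,z)⁻¹ = (-a,-z)`, and conjugating `γ = (a, z)` by `g = (c, w)`
multiplies it by the central element `(0, 2 ω c a)`. So every conjugate of `γ` lies in `Z · γ`,
and taking `c = n • b` with `ω b a ≠ 0` (which nondegeneracy provides when `a ≠ 0`) realises
every multiple of `n₀ = 2 ω b a`.
-/

namespace Heis

variable {A : Type*} [AddCommGroup A] {ω : A →ₗ[ℤ] A →ₗ[ℤ] ℤ}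

theorem mul_mul_inv_eq_mk_zero_mul (hω : ω.IsAlt) (g γ : Heis ω) :
    g * γ * g⁻¹ = ⟨0, 2 * ω g.fst γ.fst⟩ * γ := by
  have hskew : ω γ.fst g.fst = -ω g.fst γ.fst := (hω.neg g.fst γ.fst).symm
  simp only [mul_def, inv_def, map_add, map_neg, map_zero, LinearMap.add_apply,
    LinearMap.zero_apply, hω.self_eq_zero, hskew]
  exact congrArg₂ Heis.mk (by abel) (by ring)

end Heis

theorem heisenberg_conjugacy_class_sandwich_general
    {A : Type*} [AddCommGroup A]
    (ω : A →ₗ[ℤ] A →ₗ[ℤ] ℤ) (hω : ∀ a : A, ω a a = 0)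
    (hnd : ∀ a : A, a ≠ 0 → ∃ b : A, ω a b ≠ 0)
    (a₀ : A) (z₀ : ℤ) (ha₀ : a₀ ≠ 0) :
    ∃ n₀ : ℤ, n₀ ≠ 0 ∧
      (∀ n : ℤ, ∃ g : Heis ω, g * ⟨a₀, z₀⟩ * g⁻¹ = (⟨0, n₀ * n⟩ : Heis ω) * ⟨a₀, z₀⟩) ∧
      (∀ g : Heis ω, ∃ z : ℤ, g * ⟨a₀, z₀⟩ * g⁻¹ = (⟨0, z⟩ : Heis ω) * ⟨a₀, z₀⟩) := by
  have hω : ω.IsAlt := hω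
  obtain ⟨b₀, hb₀⟩ := hnd a₀ ha₀
  have hb₀a₀ : ω b₀ a₀ ≠ 0 := fun h => hb₀ (hω.eq_iff.mp h)
  refine ⟨2 * ω b₀ a₀, mul_ne_zero two_ne_zero hb₀a₀, fun n => ⟨⟨n • b₀, 0⟩, ?_⟩,
    fun g => ⟨_, Heis.mul_mul_inv_eq_mk_zero_mul hω g _⟩⟩
  rw [Heis.mul_mul_inv_eq_mk_zero_mul hω]
  simp only [map_zsmul, LinearMap.smul_apply, smul_eq_mul]
  congr 2
  ring

/-- In the Heisenberg group `Γ = A × ℤ` over a nondegenerate alternating integral bilinear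
form `ω` on a free abelian group `A` of rank `2k`, the conjugacy class `𝔎` of a noncentral
element `γ₀ = (a₀, z₀)` (i.e. `a₀ ≠ 0`) satisfies
`{(0, n₀ n) : n ∈ ℤ} · γ₀ ⊆ 𝔎 ⊆ Z · γ₀` for some nonzero integer `n₀`,
where `Z = {0} × ℤ` is the center. -/
theorem heisenberg_conjugacy_class_sandwich
    {A : Type*} [AddCommGroup A] [Module.Free ℤ A] [Module.Finite ℤ A]
    (k : ℕ) (hrank : Module.finrank ℤ A = 2 * k)
    (ω : A →ₗ[ℤ] A →ₗ[ℤ] ℤ) (hω : ∀ a : A, ω a a = 0)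
    (hnd : ∀ a : A, a ≠ 0 → ∃ b : A, ω a b ≠ 0)
    (a₀ : A) (z₀ : ℤ) (ha₀ : a₀ ≠ 0) :
    ∃ n₀ : ℤ, n₀ ≠ 0 ∧
      (∀ n : ℤ, ∃ g : Heis ω, g * ⟨a₀, z₀⟩ * g⁻¹ = (⟨0, n₀ * n⟩ : Heis ω) * ⟨a₀, z₀⟩) ∧
      (∀ g : Heis ω, ∃ z : ℤ, g * ⟨a₀, z₀⟩ * g⁻¹ = (⟨0, z⟩ : Heis ω) * ⟨a₀, z₀⟩) :=
  heisenberg_conjugacy_class_sandwich_general ω hω hnd a₀ z₀ ha₀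
end

section
/- The function s ↦ 2·arsinh(cosh(s)·sinh(ℓ/2)) satisfies, as s → +∞, 2·arsinh(cosh(s)·sinh(ℓ/2)) = 2s + 2·log(sinh(ℓ/2)) + O(e^{−2s}); in particular the difference (2s+ℓ) − 2·arsinh(cosh(s)·sinh(ℓ/2)) is bounded by a constant depending only on ℓ > 0. -/
/-!
Since `x + √(1 + x²)` lies between `2x` and `2x + 1/(2x)`, `arsinh x = log (2x) + O(x⁻²)`.
For `x = cosh s · sinh (ℓ/2)` we have `log (2x) = s + log (sinh (ℓ/2)) + log (1 + e^{-2s})`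
and `x⁻² = O(e^{-2s})`, so both error terms are `O(e^{-2s})`.
-/

namespace Real

theorem log_two_mul_le_arsinh {x : ℝ} (hx : 0 < x) : log (2 * x) ≤ arsinh x := by
  have hsqrt : x ≤ √(1 + x ^ 2) := (le_sqrt' hx).2 (by linarith)
  exact log_le_log (by positivity) (by linarith)

theorem arsinh_le_log_two_mul_add {x : ℝ} (hx : 0 < x) :
    arsinh x ≤ log (2 * x) + 1 / (4 * x ^ 2) := by
  have hsqrt : √(1 + x ^ 2) ≤ x + 1 / (2 * x) :=
    sqrt_le_iff.2 ⟨by positivity, by field_simp; nlinarith⟩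
  have hy : 0 < 1 + 1 / (4 * x ^ 2) := by positivity
  calc arsinh x ≤ log (2 * x * (1 + 1 / (4 * x ^ 2))) :=
        log_le_log (by positivity) (by field_simp at hsqrt ⊢; nlinarith)
    _ = log (2 * x) + log (1 + 1 / (4 * x ^ 2)) := log_mul (by positivity) hy.ne'
    _ ≤ log (2 * x) + 1 / (4 * x ^ 2) := by linarith [log_le_sub_one_of_pos hy]

theorem two_mul_cosh_eq_exp_mul (s : ℝ) : 2 * cosh s = exp s * (1 + exp (-2 * s)) := by
  rw [cosh_eq, mul_add, ← exp_add]
  ring_nf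

theorem log_two_mul_cosh (s : ℝ) : log (2 * cosh s) = s + log (1 + exp (-2 * s)) := by
  have hpos : 0 < 1 + exp (-2 * s) := by positivity
  rw [two_mul_cosh_eq_exp_mul, log_mul (exp_pos s).ne' hpos.ne', log_exp]

theorem exp_le_two_mul_cosh (s : ℝ) : exp s ≤ 2 * cosh s := by
  rw [two_mul_cosh_eq_exp_mul]
  exact le_mul_of_one_le_right (exp_pos s).le (by linarith [exp_pos (-2 * s)])

theorem arsinh_cosh_mul_sub_bounds {a : ℝ} (ha : 0 < a) (s : ℝ) :
    0 ≤ arsinh (cosh s * a) - (s + log a) ∧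
      arsinh (cosh s * a) - (s + log a) ≤ (1 + 1 / a ^ 2) * exp (-2 * s) := by
  set x := cosh s * a
  have hx : 0 < x := mul_pos (cosh_pos s) ha
  have hlog : log (2 * x) = s + log a + log (1 + exp (-2 * s)) := by
    rw [← mul_assoc, log_mul (by positivity) ha.ne', log_two_mul_cosh]
    ring
  have hlog_nonneg : 0 ≤ log (1 + exp (-2 * s)) :=
    log_nonneg (by linarith [exp_pos (-2 * s)])
  have hlog_le : log (1 + exp (-2 * s)) ≤ exp (-2 * s) := by
    linarith [log_le_sub_one_of_pos (show 0 < 1 + exp (-2 * s) by positivity)]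
  -- `4x² = (2 cosh s)² a² ≥ e^{2s} a²`
  have hinv : 1 / (4 * x ^ 2) ≤ 1 / a ^ 2 * exp (-2 * s) := by
    have hexp : exp (-2 * s) * exp s ^ 2 = 1 := by rw [← exp_nat_mul, ← exp_add]; simp
    have hcosh := pow_le_pow_left₀ (exp_pos s).le (exp_le_two_mul_cosh s) 2
    rw [div_le_iff₀ (by positivity)]
    calc 1 = 1 / a ^ 2 * exp (-2 * s) * (exp s ^ 2 * a ^ 2) := by
          field_simp
          simpa only [neg_mul] using hexp.symm
      _ ≤ 1 / a ^ 2 * exp (-2 * s) * ((2 * cosh s) ^ 2 * a ^ 2) := by gcongr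
      _ = 1 / a ^ 2 * exp (-2 * s) * (4 * x ^ 2) := by ring
  constructor
  · linarith [log_two_mul_le_arsinh hx]
  · linarith [arsinh_le_log_two_mul_add hx]

end Real

open Real

/-- Asymptotics of `s ↦ 2 arsinh (cosh s · sinh (ℓ/2))`: it equals
`2s + 2 log (sinh (ℓ/2)) + O(e^{-2s})` as `s → +∞`, and in particular the difference
`(2s + ℓ) - 2 arsinh (cosh s · sinh (ℓ/2))` is bounded by a constant depending only on `ℓ`. -/
theorem arsinh_cosh_asymptotic (ℓ : ℝ) (hℓ : 0 < ℓ) :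
    ∃ C : ℝ, 0 < C ∧ ∀ s : ℝ, 0 ≤ s →
      |2 * Real.arsinh (Real.cosh s * Real.sinh (ℓ / 2)) -
          (2 * s + 2 * Real.log (Real.sinh (ℓ / 2)))| ≤ C * Real.exp (-2 * s) ∧
      (2 * s + ℓ) - 2 * Real.arsinh (Real.cosh s * Real.sinh (ℓ / 2)) ≤ C := by
  set a := sinh (ℓ / 2)
  have ha : 0 < a := sinh_pos_iff.2 (half_pos hℓ)
  set K := 2 * (1 + 1 / a ^ 2)
  have hK : 0 ≤ K := by positivity
  refine ⟨K + |ℓ - 2 * log a|, by positivity, fun s _ => ?_⟩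
  obtain ⟨hlower, hupper⟩ := arsinh_cosh_mul_sub_bounds ha s
  have hKC : K * exp (-2 * s) ≤ (K + |ℓ - 2 * log a|) * exp (-2 * s) := by
    gcongr
    exact le_add_of_nonneg_right (abs_nonneg _)
  have hC : 0 ≤ (K + |ℓ - 2 * log a|) * exp (-2 * s) := by positivity
  refine ⟨abs_le.2 ⟨by linarith, by linarith⟩, ?_⟩
  linarith [le_abs_self (ℓ - 2 * log a)]
end

section
/- Consider the Hermitian form q(z) = −z₀·conj(z_n) + z·conj(z) − z_n·conj(z₀) of signature (1,n) on ℂ^{n+1} = ℂ × ℂ^{n−1} × ℂ, and the Heisenberg translation T_Z of complex hyperbolic space ℍⁿ_ℂ induced by the matrix with rows (1, z*, z₀), (0, I, z), (0, 0, 1) for Z = [z₀ : z : 1] ∈ ∂∞ℍⁿ_ℂ ∖ {∞}. Then for any point W = [w₀ : w : 1] on the horosphere q = −2, one has d(W, T_Z W) = arcosh(|z·conj(w) − conj(z)·w − z₀ − 2|/2), and this quantity is independent of W if and only if z = 0 (i.e. T_Z is a vertical Heisenberg translation); moreover if z ≠ 0 it is unbounded as W ranges over the horosphere. -/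
/-!
For null `Z` the matrix of `T_Z` preserves the form, so `T_Z W` stays on the horosphere
`q = -2` with `W`, and the distance reduces to `arcosh (|⟨W, T_Z W⟩| / 2)`, where
`⟨W, T_Z W⟩` is the conjugate of `conj(z·w̄) - z·w̄ - z₀ - 2`. The imaginary part of that
quantity is `-2 Im (z·w̄) - Im z₀`, which for `z ≠ 0` takes every real value as `w` runs over
the line `ℝ i z`; hence the displacement is unbounded, and in particular not constant. For
`z = 0` it is `arcosh (|z₀ + 2| / 2)` everywhere.
-/

noncomputable section

/-- Inverse hyperbolic cosine. -/
def arcosh (x : ℝ) : ℝ := Real.log (x + Real.sqrt (x ^ 2 - 1))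

/-- The Hermitian form of signature `(1,n)` on `ℂ^{n+1} = ℂ × ℂ^{n-1} × ℂ`:
`⟨z,w⟩ = -z₀ conj(wₙ) + z·conj(w) - zₙ conj(w₀)`. -/
def herm {m : ℕ} (x y : ℂ × EuclideanSpace ℂ (Fin m) × ℂ) : ℂ :=
  -x.1 * (starRingEnd ℂ) y.2.2 + (inner ℂ y.2.1 x.2.1 : ℂ) - x.2.2 * (starRingEnd ℂ) y.1

/-- The distance in the projective model of complex hyperbolic space:
`d(X,Y) = arcosh √(⟨x,y⟩⟨y,x⟩ / (q(x) q(y)))` for lifts `x, y`. -/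
def chDist {m : ℕ} (x y : ℂ × EuclideanSpace ℂ (Fin m) × ℂ) : ℝ :=
  arcosh (Real.sqrt (Complex.normSq (herm x y) / ((herm x x).re * (herm y y).re)))

/-- The Heisenberg translation `T_Z` of `ℍⁿ_ℂ` associated to
`Z = [z₀ : z : 1] ∈ ∂∞ℍⁿ_ℂ ∖ {∞}`, acting on lifts with last coordinate preserved:
`(w₀, w, wₙ) ↦ (w₀ + z*·w + z₀ wₙ, w + wₙ z, wₙ)`. -/
def TZ {m : ℕ} (z₀ : ℂ) (z : EuclideanSpace ℂ (Fin m))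
    (W : ℂ × EuclideanSpace ℂ (Fin m) × ℂ) : ℂ × EuclideanSpace ℂ (Fin m) × ℂ :=
  (W.1 + (inner ℂ z W.2.1 : ℂ) + z₀ * W.2.2, W.2.1 + W.2.2 • z, W.2.2)

open ComplexConjugate

section

variable {m : ℕ}

lemma herm_self_of_last_eq_one (w₀ : ℂ) (w : EuclideanSpace ℂ (Fin m)) :
    herm ((w₀, w, 1) : ℂ × EuclideanSpace ℂ (Fin m) × ℂ) (w₀, w, 1)
      = ((‖w‖ ^ 2 - 2 * w₀.re : ℝ) : ℂ) := by
  simp only [herm, map_one, mul_one, inner_self_eq_norm_sq_to_K, Complex.coe_algebraMap,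
    Complex.ofReal_sub, Complex.ofReal_pow, Complex.ofReal_mul, Complex.ofReal_ofNat]
  linear_combination 2 * Complex.re_eq_add_conj w₀

lemma herm_horosphere_point (w : EuclideanSpace ℂ (Fin m)) :
    herm ((((‖w‖ ^ 2 / 2 + 1 : ℝ) : ℂ), w, 1) : ℂ × EuclideanSpace ℂ (Fin m) × ℂ)
      (((‖w‖ ^ 2 / 2 + 1 : ℝ) : ℂ), w, 1) = -2 := by
  rw [herm_self_of_last_eq_one, Complex.ofReal_re]
  push_cast
  ring

lemma herm_TZ_TZ (z₀ : ℂ) (z : EuclideanSpace ℂ (Fin m))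
    (x y : ℂ × EuclideanSpace ℂ (Fin m) × ℂ) :
    herm (TZ z₀ z x) (TZ z₀ z y)
      = herm x y + x.2.2 * conj y.2.2 * herm ((z₀, z, 1) : ℂ × EuclideanSpace ℂ (Fin m) × ℂ)
          (z₀, z, 1) := by
  simp only [herm, TZ, inner_add_left, inner_add_right, inner_smul_left, inner_smul_right,
    map_add, map_mul, map_one, mul_one]
  linear_combination (-x.2.2) * (inner_conj_symm (𝕜 := ℂ) y.2.1 z)

lemma herm_TZ_right (z₀ w₀ : ℂ) (z w : EuclideanSpace ℂ (Fin m)) :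
    herm ((w₀, w, 1) : ℂ × EuclideanSpace ℂ (Fin m) × ℂ) (TZ z₀ z (w₀, w, 1))
      = herm ((w₀, w, 1) : ℂ × EuclideanSpace ℂ (Fin m) × ℂ) (w₀, w, 1)
          + inner ℂ z w - conj (inner ℂ z w) - conj z₀ := by
  simp only [herm, TZ, inner_add_left, one_smul, map_add, map_one, mul_one]
  ring

lemma chDist_eq_of_herm_self_eq {x y : ℂ × EuclideanSpace ℂ (Fin m) × ℂ} {s : ℝ}
    (hx : herm x x = s) (hy : herm y y = s) :
    chDist x y = arcosh (‖herm x y‖ / |s|) := by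
  rw [chDist, hx, hy, Complex.ofReal_re, ← Complex.sq_norm, ← abs_mul_abs_self s, ← pow_two,
    ← div_pow, Real.sqrt_sq (by positivity)]

lemma chDist_TZ_of_herm_eq_neg_two {z₀ w₀ : ℂ} {z w : EuclideanSpace ℂ (Fin m)}
    (hZ : herm ((z₀, z, 1) : ℂ × EuclideanSpace ℂ (Fin m) × ℂ) (z₀, z, 1) = 0)
    (hW : herm ((w₀, w, 1) : ℂ × EuclideanSpace ℂ (Fin m) × ℂ) (w₀, w, 1) = -2) :
    chDist (w₀, w, 1) (TZ z₀ z (w₀, w, 1))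
      = arcosh (‖conj (inner ℂ z w) - inner ℂ z w - z₀ - 2‖ / 2) := by
  have hTW : herm (TZ z₀ z (w₀, w, 1)) (TZ z₀ z (w₀, w, 1)) = -2 := by
    rw [herm_TZ_TZ, hW, hZ, mul_zero, add_zero]
  have hdisp : herm ((w₀, w, 1) : ℂ × EuclideanSpace ℂ (Fin m) × ℂ) (TZ z₀ z (w₀, w, 1))
      = conj (conj (inner ℂ z w) - inner ℂ z w - z₀ - 2) := by
    rw [herm_TZ_right, hW]
    simp only [map_sub, Complex.conj_conj, map_ofNat]
    ring
  rw [chDist_eq_of_herm_self_eq (s := -2) (by rw [hW]; norm_num) (by rw [hTW]; norm_num), hdisp,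
    Complex.norm_conj]
  norm_num

lemma exists_im_inner_eq {z : EuclideanSpace ℂ (Fin m)} (hz : z ≠ 0) (r : ℝ) :
    ∃ w : EuclideanSpace ℂ (Fin m), (inner ℂ z w).im = r := by
  refine ⟨(Complex.I * ((r / ‖z‖ ^ 2 : ℝ) : ℂ)) • z, ?_⟩
  have hz' : ‖z‖ ≠ 0 := norm_ne_zero_iff.mpr hz
  rw [inner_smul_right, inner_self_eq_norm_sq_to_K]
  simp [← Complex.ofReal_pow, hz']

lemma exists_lt_chDist_TZ {z₀ : ℂ} {z : EuclideanSpace ℂ (Fin m)}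
    (hZ : herm ((z₀, z, 1) : ℂ × EuclideanSpace ℂ (Fin m) × ℂ) (z₀, z, 1) = 0) (hz : z ≠ 0)
    (M : ℝ) : ∃ (w₀ : ℂ) (w : EuclideanSpace ℂ (Fin m)),
      herm ((w₀, w, 1) : ℂ × EuclideanSpace ℂ (Fin m) × ℂ) (w₀, w, 1) = -2 ∧
      M < chDist (w₀, w, 1) (TZ z₀ z (w₀, w, 1)) := by
  obtain ⟨w, hw⟩ := exists_im_inner_eq hz (-(2 * Real.cosh |M| + 1 + z₀.im) / 2)
  have hlarge : Real.cosh |M| < ‖conj (inner ℂ z w) - inner ℂ z w - z₀ - 2‖ / 2 := by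
    have him := Complex.im_le_norm (conj (inner ℂ z w) - inner ℂ z w - z₀ - 2)
    simp only [Complex.sub_im, Complex.conj_im, hw, Complex.im_ofNat] at him
    linarith
  refine ⟨_, w, herm_horosphere_point w, ?_⟩
  rw [chDist_TZ_of_herm_eq_neg_two hZ (herm_horosphere_point w)]
  -- `arcosh` is definitionally `Real.arcosh`, whose monotonicity and inverse lemmas apply.
  calc M ≤ |M| := le_abs_self M
    _ = arcosh (Real.cosh |M|) := (Real.arcosh_cosh (abs_nonneg M)).symm
    _ < arcosh (‖conj (inner ℂ z w) - inner ℂ z w - z₀ - 2‖ / 2) :=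
      (Real.arcosh_lt_arcosh (Real.cosh_pos _) ((Real.cosh_pos _).trans hlarge)).2 hlarge

end

theorem heisenberg_translation_displacement_general
    (n : ℕ) (z₀ : ℂ) (z : EuclideanSpace ℂ (Fin (n - 1)))
    (hZ : herm ((z₀, z, 1) : ℂ × EuclideanSpace ℂ (Fin (n - 1)) × ℂ) (z₀, z, 1) = 0) :
    (∀ (w₀ : ℂ) (w : EuclideanSpace ℂ (Fin (n - 1))),
        herm ((w₀, w, 1) : ℂ × EuclideanSpace ℂ (Fin (n - 1)) × ℂ) (w₀, w, 1) = -2 →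
        chDist (w₀, w, 1) (TZ z₀ z (w₀, w, 1))
          = arcosh (‖
              ((starRingEnd ℂ) (inner ℂ z w : ℂ) - (inner ℂ z w : ℂ) - z₀ - 2)‖ / 2)) ∧
    ((∀ (w₀ w₀' : ℂ) (w w' : EuclideanSpace ℂ (Fin (n - 1))),
        herm ((w₀, w, 1) : ℂ × EuclideanSpace ℂ (Fin (n - 1)) × ℂ) (w₀, w, 1) = -2 →
        herm ((w₀', w', 1) : ℂ × EuclideanSpace ℂ (Fin (n - 1)) × ℂ) (w₀', w', 1) = -2 →
        chDist (w₀, w, 1) (TZ z₀ z (w₀, w, 1))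
          = chDist (w₀', w', 1) (TZ z₀ z (w₀', w', 1))) ↔ z = 0) ∧
    (z ≠ 0 → ∀ M : ℝ, ∃ (w₀ : ℂ) (w : EuclideanSpace ℂ (Fin (n - 1))),
        herm ((w₀, w, 1) : ℂ × EuclideanSpace ℂ (Fin (n - 1)) × ℂ) (w₀, w, 1) = -2 ∧
        M < chDist (w₀, w, 1) (TZ z₀ z (w₀, w, 1))) := by
  refine ⟨fun _ _ hW => chDist_TZ_of_herm_eq_neg_two hZ hW, ⟨fun hconst => ?_, ?_⟩,
    exists_lt_chDist_TZ hZ⟩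
  · by_contra hz
    have hbase : herm ((1, 0, 1) : ℂ × EuclideanSpace ℂ (Fin (n - 1)) × ℂ) (1, 0, 1) = -2 := by
      simpa using herm_horosphere_point (0 : EuclideanSpace ℂ (Fin (n - 1)))
    obtain ⟨w₀, w, hW, hlt⟩ := exists_lt_chDist_TZ hZ hz (chDist (1, 0, 1) (TZ z₀ z (1, 0, 1)))
    exact hlt.ne (hconst 1 w₀ 0 w hbase hW)
  · rintro rfl w₀ w₀' w w' hW hW'
    simp only [chDist_TZ_of_herm_eq_neg_two hZ hW, chDist_TZ_of_herm_eq_neg_two hZ hW',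
      inner_zero_left]

/-- Proposition 6.4 (`prop:heisenberg`), computational form: for the Heisenberg translation
`T_Z` with `Z = [z₀ : z : 1]` on the null cone (`q(Z) = 0`), and any point `W = [w₀ : w : 1]`
on the horosphere `q = -2`, one has
`d(W, T_Z W) = arcosh (|z·conj(w) - conj(z)·w - z₀ - 2| / 2)`; this displacement is
independent of `W` on the horosphere if and only if `z = 0` (`T_Z` is vertical), and if
`z ≠ 0` it is unbounded on the horosphere. -/
theorem heisenberg_translation_displacement
    (n : ℕ) (hn : 2 ≤ n) (z₀ : ℂ) (z : EuclideanSpace ℂ (Fin (n - 1)))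
    (hZ : herm ((z₀, z, 1) : ℂ × EuclideanSpace ℂ (Fin (n - 1)) × ℂ) (z₀, z, 1) = 0) :
    (∀ (w₀ : ℂ) (w : EuclideanSpace ℂ (Fin (n - 1))),
        herm ((w₀, w, 1) : ℂ × EuclideanSpace ℂ (Fin (n - 1)) × ℂ) (w₀, w, 1) = -2 →
        chDist (w₀, w, 1) (TZ z₀ z (w₀, w, 1))
          = arcosh (‖
              ((starRingEnd ℂ) (inner ℂ z w : ℂ) - (inner ℂ z w : ℂ) - z₀ - 2)‖ / 2)) ∧
    ((∀ (w₀ w₀' : ℂ) (w w' : EuclideanSpace ℂ (Fin (n - 1))),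
        herm ((w₀, w, 1) : ℂ × EuclideanSpace ℂ (Fin (n - 1)) × ℂ) (w₀, w, 1) = -2 →
        herm ((w₀', w', 1) : ℂ × EuclideanSpace ℂ (Fin (n - 1)) × ℂ) (w₀', w', 1) = -2 →
        chDist (w₀, w, 1) (TZ z₀ z (w₀, w, 1))
          = chDist (w₀', w', 1) (TZ z₀ z (w₀', w', 1))) ↔ z = 0) ∧
    (z ≠ 0 → ∀ M : ℝ, ∃ (w₀ : ℂ) (w : EuclideanSpace ℂ (Fin (n - 1))),
        herm ((w₀, w, 1) : ℂ × EuclideanSpace ℂ (Fin (n - 1)) × ℂ) (w₀, w, 1) = -2 ∧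
        M < chDist (w₀, w, 1) (TZ z₀ z (w₀, w, 1))) :=
  heisenberg_translation_displacement_general n z₀ z hZ
end
end

section
/- A parabolic isometry γ of complex hyperbolic space ℍⁿ_ℂ fixing ∞, induced by a matrix of the form rows (1, a*, z₀), (0, A, b), (0,0,1) with A ∈ U(n−1) and Aa = b, is uniformly translating (i.e. d(y, γy) is constant on each horosphere centred at ∞) if and only if γ is a vertical Heisenberg translation (A = I and the translation part a = 0); and if γ is not a vertical Heisenberg translation, the displacement function y ↦ d(y, γy) is unbounded on every horosphere centred at ∞. -/
noncomputable section

/-- The parabolic isometry of `ℍⁿ_ℂ` fixing `∞` induced by the matrix with rows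
`(1, a*, z₀)`, `(0, A, Aa)`, `(0, 0, 1)`, acting on lifts. -/
def parab {m : ℕ} (z₀ : ℂ) (a : EuclideanSpace ℂ (Fin m))
    (A : EuclideanSpace ℂ (Fin m) →ₗ[ℂ] EuclideanSpace ℂ (Fin m))
    (W : ℂ × EuclideanSpace ℂ (Fin m) × ℂ) : ℂ × EuclideanSpace ℂ (Fin m) × ℂ :=
  (W.1 + (inner ℂ a W.2.1 : ℂ) + z₀ * W.2.2, A W.2.1 + W.2.2 • A a, W.2.2)

/-!
Write `q` for the Hermitian form and `g` for the lift of the parabolic map. For a point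
`x = (w₀, w, 1)` on the horosphere `q(x) = -s` one computes
`⟨x, g x⟩ = -s - conj z₀ + ⟪A w - w, w⟫ + ⟪A a, w⟫ - ⟪w, a⟫`, so the displacement there is
`arcosh (‖D(w) - (s + conj z₀)‖ / s)` with `D(w)` the last three terms. For a vertical
translation `D = 0` and the displacement is constant. Otherwise `D(t v)` is a real polynomial
`t² c + t d` with `(c, d) ≠ 0` for a suitable `v` (`v` with `⟪A v, v⟫ ≠ ⟪v, v⟫` when `A ≠ I`,
`v = i a` when `A = I`), hence unbounded, and so is the displacement.
-/

open scoped InnerProductSpace ComplexConjugate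

lemma lt_arcosh_of_exp_lt {M x : ℝ} (h : Real.exp M < x) : M < arcosh x := by
  have hx : 0 < x := (Real.exp_pos M).trans h
  calc M < Real.log x := (Real.lt_log_iff_exp_lt hx).mpr h
    _ ≤ arcosh x := Real.log_le_log hx (le_add_of_nonneg_right (Real.sqrt_nonneg _))

lemma Complex.exists_le_norm_sq_mul_add_mul {c d : ℂ} (hcd : c ≠ 0 ∨ d ≠ 0) (K : ℝ) :
    ∃ t : ℝ, K ≤ ‖(t : ℂ) ^ 2 * c + t * d‖ := by
  by_cases hc : c = 0
  · have hd : 0 < ‖d‖ := norm_pos_iff.mpr (hcd.resolve_left (not_not.mpr hc))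
    refine ⟨K / ‖d‖, ?_⟩
    rw [hc, mul_zero, zero_add, norm_mul, Complex.norm_real, Real.norm_eq_abs, abs_div,
      abs_norm, div_mul_cancel₀ _ hd.ne']
    exact le_abs_self K
  · have hc : 0 < ‖c‖ := norm_pos_iff.mpr hc
    set t := max 1 ((|K| + ‖d‖) / ‖c‖)
    have ht : 1 ≤ t := le_max_left _ _
    have htc : |K| + ‖d‖ ≤ t * ‖c‖ := (div_le_iff₀ hc).mp (le_max_right _ _)
    refine ⟨t, ?_⟩
    calc K ≤ t * |K| := (le_abs_self K).trans (le_mul_of_one_le_left (abs_nonneg K) ht)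
      _ ≤ t * (t * ‖c‖ - ‖d‖) := by gcongr; linarith
      _ = ‖(t : ℂ) ^ 2 * c‖ - ‖(-(t : ℂ)) * d‖ := by
        simp only [norm_mul, norm_pow, norm_neg, Complex.norm_real, Real.norm_eq_abs,
          abs_of_nonneg (zero_le_one.trans ht)]
        ring
      _ ≤ ‖(t : ℂ) ^ 2 * c - (-(t : ℂ)) * d‖ := norm_sub_norm_le _ _
      _ = ‖(t : ℂ) ^ 2 * c + t * d‖ := by ring_nf

section Parabolic

variable {m : ℕ}

/-- `⟨x, g x⟩ - q(x) + conj z₀` at a lift `x = (w₀, w, 1)`. -/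
def parabDefect (A : EuclideanSpace ℂ (Fin m) →ₗ[ℂ] EuclideanSpace ℂ (Fin m))
    (a w : EuclideanSpace ℂ (Fin m)) : ℂ :=
  ⟪A w - w, w⟫_ℂ + ⟪A a, w⟫_ℂ - ⟪w, a⟫_ℂ

lemma herm_self_mk_one (w₀ : ℂ) (w : EuclideanSpace ℂ (Fin m)) :
    herm (w₀, w, 1) (w₀, w, 1) = -w₀ - conj w₀ + ⟪w, w⟫_ℂ := by
  simp only [herm, map_one, mul_one, one_mul]
  ring

lemma herm_mk_one_parab (z₀ w₀ : ℂ) (a w : EuclideanSpace ℂ (Fin m))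
    (A : EuclideanSpace ℂ (Fin m) →ₗ[ℂ] EuclideanSpace ℂ (Fin m)) :
    herm (w₀, w, 1) (parab z₀ a A (w₀, w, 1))
      = herm (w₀, w, 1) (w₀, w, 1) + parabDefect A a w - conj z₀ := by
  rw [herm_self_mk_one, parabDefect, ← inner_conj_symm w a]
  simp only [herm, parab, inner_add_left, inner_sub_left, map_add, map_one, one_smul, mul_one,
    one_mul]
  ring

lemma parabDefect_ofReal_smul (A : EuclideanSpace ℂ (Fin m) →ₗ[ℂ] EuclideanSpace ℂ (Fin m))
    (a v : EuclideanSpace ℂ (Fin m)) (t : ℝ) :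
    parabDefect A a ((t : ℂ) • v)
      = (t : ℂ) ^ 2 * ⟪A v - v, v⟫_ℂ + t * (⟪A a, v⟫_ℂ - ⟪v, a⟫_ℂ) := by
  simp only [parabDefect, map_smul, ← smul_sub, inner_smul_left, inner_smul_right,
    Complex.conj_ofReal]
  ring

lemma exists_parabDefect_coeff_ne_zero
    {A : EuclideanSpace ℂ (Fin m) →ₗ[ℂ] EuclideanSpace ℂ (Fin m)}
    {a : EuclideanSpace ℂ (Fin m)} (h : ¬(A = LinearMap.id ∧ a = 0)) :
    ∃ v, ⟪A v - v, v⟫_ℂ ≠ 0 ∨ ⟪A a, v⟫_ℂ - ⟪v, a⟫_ℂ ≠ 0 := by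
  by_cases hA : A = LinearMap.id
  · subst hA
    have ha : a ≠ 0 := fun ha => h ⟨rfl, ha⟩
    refine ⟨Complex.I • a, Or.inr ?_⟩
    have hI : ⟪a, Complex.I • a⟫_ℂ - ⟪Complex.I • a, a⟫_ℂ = 2 * Complex.I * ⟪a, a⟫_ℂ := by
      simp only [inner_smul_left, inner_smul_right, Complex.conj_I]
      ring
    rw [LinearMap.id_apply, hI]
    exact mul_ne_zero (mul_ne_zero two_ne_zero Complex.I_ne_zero) (inner_self_ne_zero.mpr ha)
  · obtain ⟨v, hv⟩ : ∃ v, ⟪A v, v⟫_ℂ ≠ ⟪v, v⟫_ℂ := by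
      by_contra! hAv
      exact hA ((ext_inner_map A LinearMap.id).mp hAv)
    exact ⟨v, Or.inl (by rwa [inner_sub_left, sub_ne_zero])⟩

lemma exists_le_norm_parabDefect
    {A : EuclideanSpace ℂ (Fin m) →ₗ[ℂ] EuclideanSpace ℂ (Fin m)}
    {a : EuclideanSpace ℂ (Fin m)} (h : ¬(A = LinearMap.id ∧ a = 0)) (K : ℝ) :
    ∃ w, K ≤ ‖parabDefect A a w‖ := by
  obtain ⟨v, hv⟩ := exists_parabDefect_coeff_ne_zero h
  obtain ⟨t, ht⟩ := Complex.exists_le_norm_sq_mul_add_mul hv K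
  exact ⟨(t : ℂ) • v, by rwa [parabDefect_ofReal_smul]⟩

lemma chDist_eq_arcosh_of_herm_self_eq {x y : ℂ × EuclideanSpace ℂ (Fin m) × ℂ} {s : ℝ}
    (hs : 0 < s) (hx : herm x x = -s) (hy : herm y y = -s) :
    chDist x y = arcosh (‖herm x y‖ / s) := by
  rw [chDist, hx, hy, Complex.neg_re, Complex.ofReal_re, neg_mul_neg, ← sq,
    Real.sqrt_div (Complex.normSq_nonneg _), Real.sqrt_sq hs.le, ← Complex.norm_def]

lemma chDist_parab_of_herm_self_eq {z₀ : ℂ} {a : EuclideanSpace ℂ (Fin m)}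
    {A : EuclideanSpace ℂ (Fin m) →ₗ[ℂ] EuclideanSpace ℂ (Fin m)}
    (hq : ∀ V, herm (parab z₀ a A V) (parab z₀ a A V) = herm V V)
    {s : ℝ} (hs : 0 < s) {w₀ : ℂ} {w : EuclideanSpace ℂ (Fin m)}
    (hx : herm (w₀, w, 1) (w₀, w, 1) = -s) :
    chDist (w₀, w, 1) (parab z₀ a A (w₀, w, 1))
      = arcosh (‖parabDefect A a w - (s + conj z₀)‖ / s) := by
  rw [chDist_eq_arcosh_of_herm_self_eq hs hx ((hq _).trans hx), herm_mk_one_parab, hx]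
  ring_nf

lemma herm_self_mk_one_horosphere (s : ℝ) (w : EuclideanSpace ℂ (Fin m)) :
    herm ((((‖w‖ ^ 2 + s) / 2 : ℝ) : ℂ), w, 1) ((((‖w‖ ^ 2 + s) / 2 : ℝ) : ℂ), w, 1) = -s := by
  rw [herm_self_mk_one, Complex.conj_ofReal, inner_self_eq_norm_sq_to_K,
    RCLike.ofReal_eq_complex_ofReal]
  push_cast
  ring

lemma exists_horosphere_lt_chDist_parab {z₀ : ℂ} {a : EuclideanSpace ℂ (Fin m)}
    {A : EuclideanSpace ℂ (Fin m) →ₗ[ℂ] EuclideanSpace ℂ (Fin m)}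
    (hq : ∀ V, herm (parab z₀ a A V) (parab z₀ a A V) = herm V V)
    (h : ¬(A = LinearMap.id ∧ a = 0)) {s : ℝ} (hs : 0 < s) (M : ℝ) :
    ∃ (w₀ : ℂ) (w : EuclideanSpace ℂ (Fin m)),
      herm (w₀, w, 1) (w₀, w, 1) = -s ∧ M < chDist (w₀, w, 1) (parab z₀ a A (w₀, w, 1)) := by
  obtain ⟨w, hw⟩ := exists_le_norm_parabDefect h (s * Real.exp M + 1 + ‖(s : ℂ) + conj z₀‖)
  have hx := herm_self_mk_one_horosphere s w
  refine ⟨_, w, hx, ?_⟩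
  rw [chDist_parab_of_herm_self_eq hq hs hx]
  apply lt_arcosh_of_exp_lt
  rw [lt_div_iff₀' hs]
  linarith [norm_sub_norm_le (parabDefect A a w) ((s : ℂ) + conj z₀)]

end Parabolic

theorem parabolic_uniformly_translating_iff_vertical_general
    (n : ℕ) (z₀ : ℂ) (a : EuclideanSpace ℂ (Fin (n - 1)))
    (A : EuclideanSpace ℂ (Fin (n - 1)) →ₗ[ℂ] EuclideanSpace ℂ (Fin (n - 1)))
    (hiso : ∀ V W : ℂ × EuclideanSpace ℂ (Fin (n - 1)) × ℂ,
      herm (parab z₀ a A V) (parab z₀ a A W) = herm V W) :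
    ((∀ s : ℝ, 0 < s →
        ∀ (w₀ w₀' : ℂ) (w w' : EuclideanSpace ℂ (Fin (n - 1))),
          herm ((w₀, w, 1) : ℂ × EuclideanSpace ℂ (Fin (n - 1)) × ℂ) (w₀, w, 1) = -s →
          herm ((w₀', w', 1) : ℂ × EuclideanSpace ℂ (Fin (n - 1)) × ℂ) (w₀', w', 1) = -s →
          chDist (w₀, w, 1) (parab z₀ a A (w₀, w, 1))
            = chDist (w₀', w', 1) (parab z₀ a A (w₀', w', 1)))
      ↔ (A = LinearMap.id ∧ a = 0)) ∧
    (¬(A = LinearMap.id ∧ a = 0) →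
      ∀ s : ℝ, 0 < s → ∀ M : ℝ, ∃ (w₀ : ℂ) (w : EuclideanSpace ℂ (Fin (n - 1))),
        herm ((w₀, w, 1) : ℂ × EuclideanSpace ℂ (Fin (n - 1)) × ℂ) (w₀, w, 1) = -s ∧
        M < chDist (w₀, w, 1) (parab z₀ a A (w₀, w, 1))) := by
  have hq : ∀ V, herm (parab z₀ a A V) (parab z₀ a A V) = herm V V := fun V => hiso V V
  have unbounded := fun h s (hs : 0 < s) M => exists_horosphere_lt_chDist_parab hq h hs M
  refine ⟨⟨fun hconst => ?_, ?_⟩, unbounded⟩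
  · by_contra h
    have hbase := herm_self_mk_one_horosphere 1 (0 : EuclideanSpace ℂ (Fin (n - 1)))
    obtain ⟨w₀, w, hx, hlt⟩ := unbounded h 1 one_pos (chDist _ (parab z₀ a A (_, 0, 1)))
    exact hlt.ne (hconst 1 one_pos _ _ _ _ hbase hx)
  · rintro ⟨rfl, rfl⟩ s hs w₀ w₀' w w' hx hx'
    rw [chDist_parab_of_herm_self_eq hq hs hx, chDist_parab_of_herm_self_eq hq hs hx']
    simp [parabDefect]

/-- Proposition 6.4 (`prop:heisenberg`): a parabolic isometry `γ` of `ℍⁿ_ℂ` fixing `∞`,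
induced by a matrix with rows `(1, a*, z₀)`, `(0, A, b)`, `(0,0,1)` with `A ∈ U(n-1)` and
`Aa = b`, preserving the Hermitian form, is uniformly translating (its displacement is
constant on every horosphere `q = -s`, `s > 0`, centred at `∞`) if and only if it is a
vertical Heisenberg translation (`A = I` and `a = 0`); and if it is not a vertical Heisenberg
translation, then its displacement function is unbounded on every such horosphere. -/
theorem parabolic_uniformly_translating_iff_vertical
    (n : ℕ) (hn : 2 ≤ n) (z₀ : ℂ) (a : EuclideanSpace ℂ (Fin (n - 1)))
    (A : EuclideanSpace ℂ (Fin (n - 1)) →ₗ[ℂ] EuclideanSpace ℂ (Fin (n - 1)))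
    (hA : ∀ v w : EuclideanSpace ℂ (Fin (n - 1)), (inner ℂ (A v) (A w) : ℂ) = inner ℂ v w)
    (hiso : ∀ V W : ℂ × EuclideanSpace ℂ (Fin (n - 1)) × ℂ,
      herm (parab z₀ a A V) (parab z₀ a A W) = herm V W) :
    ((∀ s : ℝ, 0 < s →
        ∀ (w₀ w₀' : ℂ) (w w' : EuclideanSpace ℂ (Fin (n - 1))),
          herm ((w₀, w, 1) : ℂ × EuclideanSpace ℂ (Fin (n - 1)) × ℂ) (w₀, w, 1) = -s →
          herm ((w₀', w', 1) : ℂ × EuclideanSpace ℂ (Fin (n - 1)) × ℂ) (w₀', w', 1) = -s →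
          chDist (w₀, w, 1) (parab z₀ a A (w₀, w, 1))
            = chDist (w₀', w', 1) (parab z₀ a A (w₀', w', 1)))
      ↔ (A = LinearMap.id ∧ a = 0)) ∧
    (¬(A = LinearMap.id ∧ a = 0) →
      ∀ s : ℝ, 0 < s → ∀ M : ℝ, ∃ (w₀ : ℂ) (w : EuclideanSpace ℂ (Fin (n - 1))),
        herm ((w₀, w, 1) : ℂ × EuclideanSpace ℂ (Fin (n - 1)) × ℂ) (w₀, w, 1) = -s ∧
        M < chDist (w₀, w, 1) (parab z₀ a A (w₀, w, 1))) :=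
  parabolic_uniformly_translating_iff_vertical_general n z₀ a A hiso
end
end
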